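/- arXiv:math/9606223 — 5 statements merged into one kernel-verified Lean document; each statement's English description precedes it below -/
import Mathlib

section
/- Along any solution of the unperturbed atmospheric system (ε = 0), the quantity D = cos φ (cos φ + 2u) is constant in time. -/
/-- Along any solution of the unperturbed atmospheric system (ε = 0), the angular
momentum `D = cos φ (cos φ + 2u)` is constant in time. -/
theorem unperturbed_angular_momentum_conserved
    (B lam u φ v : ℝ → ℝ)
    (hB : Differentiable ℝ B)
    (hcos : ∀ t, Real.cos (φ t) ≠ 0)
    (hlam : ∀ t, HasDerivAt lam (u t / Real.cos (φ t)) t)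
    (hu : ∀ t, HasDerivAt u (v t * Real.sin (φ t) * (1 + u t / Real.cos (φ t))) t)
    (hφ : ∀ t, HasDerivAt φ (v t) t)
    (hv : ∀ t, HasDerivAt v
      (-(u t) * Real.sin (φ t) * (1 + u t / Real.cos (φ t)) - deriv B (φ t)) t) :
    ∀ t s : ℝ, Real.cos (φ t) * (Real.cos (φ t) + 2 * u t)
      = Real.cos (φ s) * (Real.cos (φ s) + 2 * u s) := by
  set f : ℝ → ℝ := fun t => Real.cos (φ t) * (Real.cos (φ t) + 2 * u t) with hf
  have hD : ∀ t, HasDerivAt f 0 t := by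
    intro t
    have hc : HasDerivAt (fun t => Real.cos (φ t)) (-Real.sin (φ t) * v t) t := by
      simpa [mul_comm, Function.comp_def] using (Real.hasDerivAt_cos (φ t)).comp t (hφ t)
    have := hc.mul ((hc.add ((hu t).const_mul 2)))
    refine HasDerivAt.congr_deriv (f := f) this ?_
    have hne := hcos t
    have hcu : Real.cos (φ t) * (u t / Real.cos (φ t)) = u t := mul_div_cancel₀ _ hne
    simp only [Pi.add_apply]
    linear_combination (2 * v t * Real.sin (φ t)) * hcu
  have hdiff : Differentiable ℝ f := fun t => (hD t).differentiableAt
  intro t s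
  have : f t = f s := by
    have h := is_const_of_deriv_eq_zero hdiff (fun x => (hD x).deriv) t s
    exact h
  simpa using this
end

section
/- Along any solution of the unperturbed atmospheric system (ε = 0), the energy E = (1/2)(u² + v²) + B(φ) is constant in time. -/
/-- Along any solution of the unperturbed atmospheric system (ε = 0), the energy
`E = (1/2)(u² + v²) + B(φ)` is constant in time. -/
theorem unperturbed_energy_conserved
    (B lam u φ v : ℝ → ℝ)
    (hB : Differentiable ℝ B)
    (hcos : ∀ t, Real.cos (φ t) ≠ 0)
    (hlam : ∀ t, HasDerivAt lam (u t / Real.cos (φ t)) t)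
    (hu : ∀ t, HasDerivAt u (v t * Real.sin (φ t) * (1 + u t / Real.cos (φ t))) t)
    (hφ : ∀ t, HasDerivAt φ (v t) t)
    (hv : ∀ t, HasDerivAt v
      (-(u t) * Real.sin (φ t) * (1 + u t / Real.cos (φ t)) - deriv B (φ t)) t) :
    ∀ t s : ℝ, (1/2) * (u t ^ 2 + v t ^ 2) + B (φ t)
      = (1/2) * (u s ^ 2 + v s ^ 2) + B (φ s) := by
  have key : ∀ t, HasDerivAt (fun t => (1/2) * (u t ^ 2 + v t ^ 2) + B (φ t)) 0 t := by
    intro t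
    have hBφ : HasDerivAt (fun t => B (φ t)) (deriv B (φ t) * v t) t :=
      ((hB (φ t)).hasDerivAt).comp t (hφ t)
    have h1 : HasDerivAt (fun t => (1/2) * (u t ^ 2 + v t ^ 2) + B (φ t))
        ((1/2) * (2 * u t * (v t * Real.sin (φ t) * (1 + u t / Real.cos (φ t)))
          + 2 * v t * (-(u t) * Real.sin (φ t) * (1 + u t / Real.cos (φ t)) - deriv B (φ t)))
          + deriv B (φ t) * v t) t := by
      have := ((((hu t).pow 2).add ((hv t).pow 2)).const_mul (1/2)).add hBφ
      convert this using 2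
      · rfl
      · rfl
      · rfl
      · push_cast; ring
    convert h1 using 1
    ring
  intro t s
  have := is_const_of_deriv_eq_zero (f := fun t => (1/2) * (u t ^ 2 + v t ^ 2) + B (φ t))
    (fun x => (key x).differentiableAt) (fun x => (key x).deriv) t s
  simpa using this
end

section
/- Let (λ, u, φ, v) : ℝ → ℝ⁴ be a solution of the perturbed atmospheric system with cos φ(t) ≠ 0 for all t, and set c = σ/k, θ(t) = (1/2)(λ(t) − c t) and D(t) = cos φ(t) (cos φ(t) + 2 u(t)). Then (θ, D, φ, v) satisfies the transformed atmospheric system: θ' = D/(4 cos²φ) − (1/2)(c + 1/2), D' = −2kε A(φ) cos(2kθ), φ' = v, and v' = (1/8) sin(2φ)(1 − D²/cos⁴φ) − B'(φ) − ε A'(φ) sin(2kθ). -/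
/-- A solution of the perturbed atmospheric system, rewritten in the variables
`θ(t) = (1/2)(λ(t) − c t)` and `D(t) = cos φ (cos φ + 2u)` with `c = σ/k`,
satisfies the transformed atmospheric system. -/
theorem perturbed_to_transformed_system
    (A B lam u φ v : ℝ → ℝ) (k σ ε : ℝ) (hk : k ≠ 0) (hε : 0 ≤ ε)
    (hA : Differentiable ℝ A) (hB : Differentiable ℝ B)
    (hcos : ∀ t, Real.cos (φ t) ≠ 0)
    (hlam : ∀ t, HasDerivAt lam (u t / Real.cos (φ t)) t)
    (hu : ∀ t, HasDerivAt u
      (v t * Real.sin (φ t) * (1 + u t / Real.cos (φ t))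
        - k * ε * (A (φ t) / Real.cos (φ t)) * Real.cos (k * lam t - σ * t)) t)
    (hφ : ∀ t, HasDerivAt φ (v t) t)
    (hv : ∀ t, HasDerivAt v
      (-(u t) * Real.sin (φ t) * (1 + u t / Real.cos (φ t))
        - deriv B (φ t) - ε * deriv A (φ t) * Real.sin (k * lam t - σ * t)) t)
    (c : ℝ) (hc : c = σ / k)
    (θ D : ℝ → ℝ)
    (hθdef : ∀ t, θ t = (1/2) * (lam t - c * t))
    (hDdef : ∀ t, D t = Real.cos (φ t) * (Real.cos (φ t) + 2 * u t)) :
    ∀ t : ℝ,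
      HasDerivAt θ (D t / (4 * Real.cos (φ t) ^ 2) - (1/2) * (c + 1/2)) t ∧
      HasDerivAt D (-2 * k * ε * A (φ t) * Real.cos (2 * k * θ t)) t ∧
      HasDerivAt φ (v t) t ∧
      HasDerivAt v ((1/8) * Real.sin (2 * φ t) * (1 - D t ^ 2 / Real.cos (φ t) ^ 4)
        - deriv B (φ t) - ε * deriv A (φ t) * Real.sin (2 * k * θ t)) t := by
  intro t
  have hc0 := hcos t
  have hcθ : 2 * k * θ t = k * lam t - σ * t := by
    rw [hθdef t, hc]; field_simp
  refine ⟨?_, ?_, hφ t, ?_⟩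
  · have h := ((hlam t).sub ((hasDerivAt_id t).const_mul c)).const_mul (1/2 : ℝ)
    have hθf : θ = fun s => (1/2) * (lam s - c * s) := funext hθdef
    rw [hθf]
    convert h using 1
    · rfl
    · rfl
    · rfl
    rw [hDdef t]
    field_simp
    ring
  · have hc1 : HasDerivAt (fun s => Real.cos (φ s)) (-Real.sin (φ t) * v t) t :=
      (Real.hasDerivAt_cos (φ t)).comp t (hφ t)
    have h := hc1.mul (hc1.add ((hu t).const_mul 2))
    have hDf : D = fun s => Real.cos (φ s) * (Real.cos (φ s) + 2 * u s) := funext hDdef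
    rw [hDf]
    convert h using 1
    · rfl
    · rfl
    · rfl
    rw [hcθ]
    simp only [Pi.add_apply]
    field_simp
    ring
  · convert hv t using 1
    rw [hcθ, hDdef t, Real.sin_two_mul]
    field_simp
    ring
end

section
/- Along any solution of the transformed atmospheric system, the Hamiltonian H(φ, v, θ, D) = v²/2 + (1/8)(D/cos φ − cos φ)² − (c/2) D + B(φ) + ε A(φ) sin(2kθ) is constant in time. -/
/-- Along any solution of the transformed atmospheric system, the Hamiltonian
`H(φ, v, θ, D) = v²/2 + (1/8)(D/cos φ − cos φ)² − (c/2) D + B(φ) + ε A(φ) sin(2kθ)`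
is constant in time. -/
theorem transformed_hamiltonian_conserved
    (A B : ℝ → ℝ) (k c ε : ℝ) (hk : k ≠ 0) (hε : 0 ≤ ε)
    (hA : Differentiable ℝ A) (hB : Differentiable ℝ B)
    (θ D φ v : ℝ → ℝ)
    (hcos : ∀ t, Real.cos (φ t) ≠ 0)
    (hθ : ∀ t, HasDerivAt θ (D t / (4 * Real.cos (φ t) ^ 2) - (1/2) * (c + 1/2)) t)
    (hD : ∀ t, HasDerivAt D (-2 * k * ε * A (φ t) * Real.cos (2 * k * θ t)) t)
    (hφ : ∀ t, HasDerivAt φ (v t) t)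
    (hv : ∀ t, HasDerivAt v ((1/8) * Real.sin (2 * φ t) * (1 - D t ^ 2 / Real.cos (φ t) ^ 4)
      - deriv B (φ t) - ε * deriv A (φ t) * Real.sin (2 * k * θ t)) t) :
    ∀ t s : ℝ,
      v t ^ 2 / 2 + (1/8) * (D t / Real.cos (φ t) - Real.cos (φ t)) ^ 2 - (c/2) * D t
          + B (φ t) + ε * A (φ t) * Real.sin (2 * k * θ t)
        = v s ^ 2 / 2 + (1/8) * (D s / Real.cos (φ s) - Real.cos (φ s)) ^ 2 - (c/2) * D s
          + B (φ s) + ε * A (φ s) * Real.sin (2 * k * θ s) := by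
  set H : ℝ → ℝ := fun t =>
    v t ^ 2 / 2 + (1/8) * (D t / Real.cos (φ t) - Real.cos (φ t)) ^ 2 - (c/2) * D t
      + B (φ t) + ε * A (φ t) * Real.sin (2 * k * θ t) with hH
  have key : ∀ t, HasDerivAt H 0 t := by
    intro t
    have hcosφ : HasDerivAt (fun t => Real.cos (φ t)) (-Real.sin (φ t) * v t) t :=
      (Real.hasDerivAt_cos (φ t)).comp t (hφ t)
    have h1 : HasDerivAt (fun t => v t ^ 2 / 2)
        ((2 * v t ^ 1 * ((1/8) * Real.sin (2 * φ t) * (1 - D t ^ 2 / Real.cos (φ t) ^ 4)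
          - deriv B (φ t) - ε * deriv A (φ t) * Real.sin (2 * k * θ t))) / 2) t :=
      ((hv t).pow 2).div_const 2
    have hDiv : HasDerivAt (fun t => D t / Real.cos (φ t) - Real.cos (φ t))
        (((-2 * k * ε * A (φ t) * Real.cos (2 * k * θ t)) * Real.cos (φ t)
            - D t * (-Real.sin (φ t) * v t)) / Real.cos (φ t) ^ 2
          - (-Real.sin (φ t) * v t)) t :=
      ((hD t).div hcosφ (hcos t)).sub hcosφ
    have h2 : HasDerivAt (fun t => (1/8) * (D t / Real.cos (φ t) - Real.cos (φ t)) ^ 2)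
        ((1/8) * (2 * (D t / Real.cos (φ t) - Real.cos (φ t)) ^ 1 *
          (((-2 * k * ε * A (φ t) * Real.cos (2 * k * θ t)) * Real.cos (φ t)
            - D t * (-Real.sin (φ t) * v t)) / Real.cos (φ t) ^ 2
          - (-Real.sin (φ t) * v t)))) t :=
      (hDiv.pow 2).const_mul (1/8)
    have h3 : HasDerivAt (fun t => (c/2) * D t)
        ((c/2) * (-2 * k * ε * A (φ t) * Real.cos (2 * k * θ t))) t :=
      (hD t).const_mul (c/2)
    have h4 : HasDerivAt (fun t => B (φ t)) (deriv B (φ t) * v t) t :=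
      ((hB (φ t)).hasDerivAt).comp t (hφ t)
    have hAφ : HasDerivAt (fun t => A (φ t)) (deriv A (φ t) * v t) t :=
      ((hA (φ t)).hasDerivAt).comp t (hφ t)
    have hsin : HasDerivAt (fun t => Real.sin (2 * k * θ t))
        (Real.cos (2 * k * θ t) *
          (2 * k * (D t / (4 * Real.cos (φ t) ^ 2) - (1/2) * (c + 1/2)))) t :=
      by have := (Real.hasDerivAt_sin (2 * k * θ t)).comp t ((hθ t).const_mul (2 * k)); exact this
    have h5 : HasDerivAt (fun t => ε * A (φ t) * Real.sin (2 * k * θ t))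
        ((ε * (deriv A (φ t) * v t)) * Real.sin (2 * k * θ t)
          + (ε * A (φ t)) * (Real.cos (2 * k * θ t) *
            (2 * k * (D t / (4 * Real.cos (φ t) ^ 2) - (1/2) * (c + 1/2))))) t :=
      (hAφ.const_mul ε).mul hsin
    have htot := (((h1.add h2).sub h3).add h4).add h5
    refine htot.congr_deriv ?_
    have hs2 : Real.sin (2 * φ t) = 2 * Real.sin (φ t) * Real.cos (φ t) := by
      rw [Real.sin_two_mul]
    rw [hs2]
    have hC : Real.cos (φ t) ≠ 0 := hcos t
    field_simp
    ring
  intro t s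
  have hd : ∀ x, deriv H x = 0 := fun x => (key x).deriv
  have hdiff : Differentiable ℝ H := fun x => (key x).differentiableAt
  have := is_const_of_deriv_eq_zero hdiff hd t s
  simpa [hH] using this
end

section
/- Let α < 1/8, s = √(1 − 8α), B(φ) = α sin²(φ), c = (1/2)(s − 1), and ε = 0. Then for every φ₀ ∈ (−π/2, π/2) and every θ₀ ∈ ℝ, the point (θ₀, D, φ₀, v) = (θ₀, s cos²(φ₀), φ₀, 0) is an equilibrium of the transformed atmospheric system, and the unperturbed Hamiltonian H₀(φ, v, θ, D) = v²/2 + (1/8)(D/cos φ − cos φ)² − (c/2) D + B(φ) takes the same value α at all of these points. (Thus a flat parabolic resonance occurs: a one-parameter family of circles of fixed points all lying on the single energy surface H₀ = α; the case B ≡ 0, c = 0 is α = 0.) -/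
/-- Flat parabolic resonance: with `B(φ) = α sin²φ` (`α < 1/8`), `s = √(1 − 8α)`,
`c = (1/2)(s − 1)` and `ε = 0`, every point `(θ₀, s cos²φ₀, φ₀, 0)` with
`φ₀ ∈ (−π/2, π/2)` is an equilibrium of the transformed atmospheric system
(all components of the vector field vanish there), and the unperturbed Hamiltonian
`H₀ = v²/2 + (1/8)(D/cos φ − cos φ)² − (c/2)D + B(φ)` takes the same value `α` at
all of these points. -/
theorem flat_parabolic_resonance
    (α : ℝ) (hα : α < 1/8) (s : ℝ) (hs : s = Real.sqrt (1 - 8 * α))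
    (B : ℝ → ℝ) (hB : ∀ φ, B φ = α * Real.sin φ ^ 2)
    (c : ℝ) (hc : c = (1/2) * (s - 1))
    (ε : ℝ) (hε : ε = 0)
    (A : ℝ → ℝ) (k : ℝ) (hk : k ≠ 0) :
    ∀ φ₀ ∈ Set.Ioo (-(Real.pi / 2)) (Real.pi / 2), ∀ θ₀ : ℝ,
      (s * Real.cos φ₀ ^ 2) / (4 * Real.cos φ₀ ^ 2) - (1/2) * (c + 1/2) = 0 ∧
      -2 * k * ε * A φ₀ * Real.cos (2 * k * θ₀) = 0 ∧
      (1/8) * Real.sin (2 * φ₀) * (1 - (s * Real.cos φ₀ ^ 2) ^ 2 / Real.cos φ₀ ^ 4)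
        - deriv B φ₀ - ε * deriv A φ₀ * Real.sin (2 * k * θ₀) = 0 ∧
      (0:ℝ) ^ 2 / 2
        + (1/8) * ((s * Real.cos φ₀ ^ 2) / Real.cos φ₀ - Real.cos φ₀) ^ 2
        - (c/2) * (s * Real.cos φ₀ ^ 2) + B φ₀ = α := by
  intro φ₀ hφ₀ θ₀
  have hcos : Real.cos φ₀ ≠ 0 :=
    ne_of_gt (Real.cos_pos_of_mem_Ioo ⟨hφ₀.1, hφ₀.2⟩)
  have hs2 : s ^ 2 = 1 - 8 * α := by
    rw [hs, Real.sq_sqrt (by linarith)]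
  have hBfun : B = fun φ => α * Real.sin φ ^ 2 := funext hB
  have hderivB : deriv B φ₀ = α * (2 * Real.sin φ₀ * Real.cos φ₀) := by
    rw [hBfun]
    have : HasDerivAt (fun φ => α * Real.sin φ ^ 2)
        (α * (2 * Real.sin φ₀ * Real.cos φ₀)) φ₀ := by
      have h1 : HasDerivAt Real.sin (Real.cos φ₀) φ₀ := Real.hasDerivAt_sin φ₀
      have h2 := (h1.pow 2)
      simpa [mul_comm, mul_assoc, mul_left_comm] using h2.const_mul α
    exact this.deriv
  refine ⟨?_, by simp [hε], ?_, ?_⟩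
  · rw [hc]
    field_simp
    ring
  · rw [hderivB, hε, Real.sin_two_mul]
    have h4 : (s * Real.cos φ₀ ^ 2) ^ 2 / Real.cos φ₀ ^ 4 = s ^ 2 := by
      field_simp
    rw [h4, hs2]
    ring
  · rw [hB, hc]
    have hsin : Real.sin φ₀ ^ 2 = 1 - Real.cos φ₀ ^ 2 := by
      have := Real.sin_sq_add_cos_sq φ₀; linarith
    have h5 : (s * Real.cos φ₀ ^ 2) / Real.cos φ₀ - Real.cos φ₀
        = (s - 1) * Real.cos φ₀ := by field_simp
    rw [h5, hsin]
    nlinarith [hs2]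
end
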